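/- Let D be a weighted oriented graph such that every vertex of V^+ is a sink, let I = I(D), and let a ∈ ℕ^n be such that the monomial x^a ∉ I^(2). Then √(I^(2) : x^a) = √(I^2 : x^a). -/

import Mathlib

open scoped BigOperators
open MvPolynomial

noncomputable section

/-- A weighted oriented graph on the vertex set `Fin n`: a loopless directed graph
together with a weight function taking values `≥ 1`. -/
structure WOGraph (n : ℕ) where
  adj : Fin n → Fin n → Prop
  loopless : ∀ i, ¬ adj i i
  w : Fin n → ℕ
  one_le_w : ∀ i, 1 ≤ w i

namespace WOGraph

variable {n : ℕ} (D : WOGraph n)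

/-- The underlying simple graph `G` of `D`. -/
def underlying : SimpleGraph (Fin n) where
  Adj i j := D.adj i j ∨ D.adj j i
  symm := ⟨fun _ _ h => h.symm⟩
  loopless := ⟨fun i h => h.elim (D.loopless i) (D.loopless i)⟩

/-- A sink: no edge leaves it. -/
def IsSink (i : Fin n) : Prop := ∀ j, ¬ D.adj i j

/-- A source: no edge enters it. -/
def IsSource (i : Fin n) : Prop := ∀ j, ¬ D.adj j i

/-- `V⁺`: the set of vertices of non-trivial weight. -/
def Vplus : Set (Fin n) := {i | 2 ≤ D.w i}

/-- Closed neighborhood `N[S]` of a set of vertices in the underlying graph. -/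
def nbhd (S : Set (Fin n)) : Set (Fin n) := S ∪ {j | ∃ i ∈ S, D.underlying.Adj i j}

/-- `{i, j, r}` induces a triangle in the underlying graph. -/
def IsTriangle (i j r : Fin n) : Prop :=
  D.underlying.Adj i j ∧ D.underlying.Adj j r ∧ D.underlying.Adj i r

/-- The maximal weight `w = max{w(x) : x ∈ V(D)}`. -/
def maxW : ℕ := Finset.univ.sup D.w

/-- Gap-free: no two disjoint edges of the underlying graph form an induced matching. -/
def GapFree : Prop := ∀ a b c d : Fin n,
  D.underlying.Adj a b → D.underlying.Adj c d → a ≠ c → a ≠ d → b ≠ c → b ≠ d →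
    (D.underlying.Adj a c ∨ D.underlying.Adj a d ∨ D.underlying.Adj b c ∨ D.underlying.Adj b d)

end WOGraph

/-- The polynomial ring `R = K[x_1, …, x_n]`. -/
abbrev MvPoly (n : ℕ) (K : Type*) [Field K] := MvPolynomial (Fin n) K

variable {n : ℕ} (K : Type*) [Field K]

/-- The edge ideal of the induced weighted oriented subgraph of `D` on a vertex subset `U`,
regarded as an ideal of `K[x_1, …, x_n]`. -/
def edgeIdealOn (D : WOGraph n) (U : Set (Fin n)) : Ideal (MvPoly n K) :=
  Ideal.span {m | ∃ i j, i ∈ U ∧ j ∈ U ∧ D.adj i j ∧ m = X i * X j ^ D.w j}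

/-- The edge ideal `I(D) = (x_i x_j^{w(x_j)} : (x_i, x_j) ∈ E(D))`. -/
def edgeIdeal (D : WOGraph n) : Ideal (MvPoly n K) := edgeIdealOn K D Set.univ

/-- The `k`-th symbolic power `I^{(k)} = ⋂_{P ∈ Min(R/I)} (I^k R_P ∩ R)`. -/
def symbolicPower {R : Type*} [CommRing R] (I : Ideal R) (k : ℕ) : Ideal R :=
  ⨅ (P : Ideal R), ⨅ (hP : P ∈ I.minimalPrimes),
    haveI : P.IsPrime := hP.1.1
    Ideal.comap (algebraMap R (Localization.AtPrime P))
      (Ideal.map (algebraMap R (Localization.AtPrime P)) (I ^ k))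

/-! ### Simplicial homology machinery, used to define multigraded Betti numbers of monomial
ideals via upper Koszul simplicial complexes, and thence Castelnuovo–Mumford regularity. -/

/-- The faces of dimension `c` (i.e. of cardinality `c + 1`) of a simplicial complex on `Fin n`. -/
abbrev Face (Δ : Set (Finset (Fin n))) (c : ℤ) : Type _ :=
  {S : Finset (Fin n) // S ∈ Δ ∧ (S.card : ℤ) = c + 1}

/-- The space of simplicial `c`-chains with coefficients in `K`. -/
abbrev SChain (Δ : Set (Finset (Fin n))) (c : ℤ) : Type _ := Face Δ c → K

open Classical in
/-- Incidence number between faces: `±1` if `T ⊂ S` with `|S \ T| = 1`, else `0`. -/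
def inc (S T : Finset (Fin n)) : K :=
  if T ⊆ S ∧ (S \ T).card = 1
  then (-1 : K) ^ (S.filter fun j => ∃ i ∈ S \ T, j < i).card
  else 0

/-- The simplicial boundary map from `c`-chains to `d`-chains (nonzero only when `d = c - 1`). -/
def bdry (Δ : Set (Finset (Fin n))) (c d : ℤ) : SChain K Δ c →ₗ[K] SChain K Δ d where
  toFun f T := ∑ᶠ S : Face Δ c, inc K S.1 T.1 * f S
  map_add' f g := by
    funext T
    simp only [Pi.add_apply, mul_add]
    exact finsum_add_distrib (Set.toFinite _) (Set.toFinite _)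
  map_smul' r f := by
    funext T
    simp only [Pi.smul_apply, smul_eq_mul, RingHom.id_apply]
    rw [mul_finsum _ _]
    exact finsum_congr fun S => by ring

/-- The reduced simplicial homology `H̃_c(Δ; K)` in dimension `c`. -/
abbrev redHomology (Δ : Set (Finset (Fin n))) (c : ℤ) : Type _ :=
  LinearMap.ker (bdry K Δ c (c - 1)) ⧸
    Submodule.comap (LinearMap.ker (bdry K Δ c (c - 1))).subtype
      (LinearMap.range (bdry K Δ (c + 1) c))

/-- The upper Koszul simplicial complex `K^a(I)` of a monomial ideal `I` in degree `a`. -/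
def upperKoszul (I : Ideal (MvPoly n K)) (a : Fin n →₀ ℕ) : Set (Finset (Fin n)) :=
  {S | (∀ i ∈ S, 1 ≤ a i) ∧
    (monomial (a - ∑ i ∈ S, Finsupp.single i 1) (1 : K)) ∈ I}

/-- The multigraded Betti number `β_{i,a}(I) = dim_K H̃_{i-1}(K^a(I); K)` of a monomial ideal. -/
def bettiMulti (I : Ideal (MvPoly n K)) (i : ℕ) (a : Fin n →₀ ℕ) : ℕ :=
  Module.finrank K (redHomology K (upperKoszul K I a) ((i : ℤ) - 1))

/-- The graded Betti number `β_{i,j}(I) = ∑_{|a| = j} β_{i,a}(I)` of a monomial ideal. -/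
def betti (I : Ideal (MvPoly n K)) (i j : ℕ) : ℕ :=
  ∑ᶠ (a : Fin n →₀ ℕ) (_ : (∑ v, a v) = j), bettiMulti K I i a

/-- Castelnuovo–Mumford regularity `reg(I) = max{j - i : β_{i,j}(I) ≠ 0}` of a monomial ideal. -/
def reg (I : Ideal (MvPoly n K)) : ℕ :=
  sSup {d : ℕ | ∃ i j : ℕ, betti K I i j ≠ 0 ∧ j = d + i}

/-- `f` is a monomial (with coefficient 1). -/
def IsMonomial (f : MvPoly n K) : Prop := ∃ e : Fin n →₀ ℕ, f = monomial e 1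

/-- `f` is a minimal monomial generator of the monomial ideal `J`. -/
def IsMinGen (J : Ideal (MvPoly n K)) (f : MvPoly n K) : Prop :=
  IsMonomial K f ∧ f ∈ J ∧ ∀ g : MvPoly n K, IsMonomial K g → g ∈ J → g ∣ f → g = f

end

/-!
The tail of an edge is not a sink, so it has weight `1` and every generator `x_i x_j^{w(x_j)}`
of `I(D)` equals `x_i^{w(x_i)} x_j^{w(x_j)}`: `I(D)` is the edge ideal of the underlying graph
`G` in the powers `x_v^{w(x_v)}`. Its minimal primes are the ideals `(x_v : v ∈ C)` of the
minimal vertex covers `C` of `G`, and `I^(2)` is a monomial ideal. A monomial `x^d` lies in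
`I^(2)` exactly when it lies in `I^2` or is divisible by `x_i^{w_i} x_j^{w_j} x_k^{w_k}` for a
triangle `ijk` of `G`: if neither holds, the vertices with too small an exponent, together with
the centre of the star formed by the remaining edges, contain a minimal vertex cover at which
`x^d` fails to be in `I^2 R_P`.

Now let `x^c x^a ∈ I^(2)` with `x^a ∉ I^(2)`. If `x^c x^a` is divisible by a triangle monomial,
that monomial does not divide `x^a`, so some triangle vertex `v` has `a_v < w_v` and `c_v > 0`.
Then `x^{(w_v + 1) c} x^a` is divisible by the product of the two triangle edges at `v`, hence
lies in `I^2`. So every monomial of `(I^(2) : x^a)` lies in `√(I^2 : x^a)`.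
-/

theorem mem_symbolicPower_iff {R : Type*} [CommRing R] {I : Ideal R} {k : ℕ} {r : R} :
    r ∈ symbolicPower I k ↔ ∀ P ∈ I.minimalPrimes, ∃ s ∉ P, s * r ∈ I ^ k := by
  simp only [symbolicPower, Submodule.mem_iInf, Ideal.mem_comap]
  refine forall₂_congr fun P hP => ?_
  have := hP.1.1
  exact IsLocalization.algebraMap_mem_map_algebraMap_iff P.primeCompl _ _ _

theorem pow_le_symbolicPower {R : Type*} [CommRing R] (I : Ideal R) (k : ℕ) :
    I ^ k ≤ symbolicPower I k := fun _ hr =>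
  mem_symbolicPower_iff.2 fun _ hP => ⟨1, hP.1.1.ne_top ∘ (Ideal.eq_top_iff_one _).2, by
    rwa [one_mul]⟩

namespace MvPolynomial

variable {σ R : Type*} [CommSemiring R]

theorem mem_ideal_of_forall_monomial_one_mem {J : Ideal (MvPolynomial σ R)}
    {p : MvPolynomial σ R} (h : ∀ c ∈ p.support, monomial c 1 ∈ J) : p ∈ J := by
  rw [p.as_sum]
  refine J.sum_mem fun c hc => ?_
  simpa [C_mul_monomial] using J.mul_mem_left (C (coeff c p)) (h c hc)

theorem X_mem_span_X_image_iff [Nontrivial R] {C : Set σ} {i : σ} :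
    (X i : MvPolynomial σ R) ∈ Ideal.span (X '' C) ↔ i ∈ C := by
  rw [mem_ideal_span_X_image, support_X]
  simp [Finsupp.single_apply_ne_zero]

variable [NoZeroDivisors R]

/-- A monomial ideal whose exponent set `S` is insensitive to the variables outside `C` is
saturated with respect to every element outside the prime `(x_i : i ∈ C)`. -/
theorem support_subset_of_support_mul_subset {C : Set σ} {S : Set (σ →₀ ℕ)}
    (hS : IsUpperSet S) (hsat : ∀ d e, (∀ i ∈ C, e i = 0) → d + e ∈ S → d ∈ S)
    {s p : MvPolynomial σ R} (hs : s ∉ Ideal.span (X '' C)) (hsp : ↑(s * p).support ⊆ S) :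
    ↑p.support ⊆ S := by
  classical
  -- Order exponents by their degree in the variables of `C`, then lexicographically. A minimal
  -- term of `s` then has no variable of `C`, and its product with a minimal term of `p` outside
  -- `S` can only arise in one way in `s * p`.
  let : LinearOrder σ := IsWellOrder.linearOrder WellOrderingRel
  let wC : σ → ℕ := fun i => if i ∈ C then 1 else 0
  let key : (σ →₀ ℕ) → ℕ ×ₗ Lex (σ →₀ ℕ) := fun d => toLex (Finsupp.weight wC d, toLex d)
  have key_add (d e) : key (d + e) = key d + key e := by simp only [map_add, toLex_add, key]; rfl
  have key_inj : Function.Injective key := fun d e h => by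
    simp only [key, toLex_inj, Prod.mk.injEq] at h
    exact h.2
  intro κ₀ hκ₀
  by_contra hκ₀S
  obtain ⟨m₀, hm₀, hm₀C⟩ : ∃ m ∈ s.support, ∀ i ∈ C, m i = 0 := by
    simpa [mem_ideal_span_X_image] using hs
  obtain ⟨υ, hυ, hυmin⟩ := s.support.exists_min_image key ⟨m₀, hm₀⟩
  obtain ⟨κ, hκ, hκmin⟩ := (p.support.filter (· ∉ S)).exists_min_image key
    ⟨κ₀, Finset.mem_filter.2 ⟨hκ₀, hκ₀S⟩⟩
  rw [Finset.mem_filter] at hκ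
  have hυC : ∀ i ∈ C, υ i = 0 := by
    have hle : Finsupp.weight wC υ ≤ Finsupp.weight wC m₀ :=
      (Prod.Lex.le_iff.1 (hυmin m₀ hm₀)).elim le_of_lt (fun h => h.1.le)
    have hm₀w : Finsupp.weight wC m₀ = 0 := by
      rw [Finsupp.weight_apply, Finsupp.sum]
      exact Finset.sum_eq_zero fun i _ => by by_cases hi : i ∈ C <;> simp [wC, hi, hm₀C]
    intro i hi
    by_contra hυi
    have h1 : wC i = 1 := if_pos hi
    have := Finsupp.le_weight_of_ne_zero' wC hυi
    omega
  refine hκ.2 (hsat κ υ hυC ?_)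
  rw [add_comm]
  by_contra hυκ
  have huniq : UniqueAdd s.support p.support υ κ := by
    intro x y hx hy hxy
    have hyS : y ∉ S := fun hyS => hυκ (hS (hxy ▸ le_add_self) hyS)
    have hkey : key υ + key κ = key x + key y := by rw [← key_add, ← key_add, hxy]
    obtain ⟨h1, h2⟩ := (add_eq_add_iff_eq_and_eq (hυmin x hx)
      (hκmin y (Finset.mem_filter.2 ⟨hy, hyS⟩))).1 hkey
    exact ⟨key_inj h1.symm, key_inj h2.symm⟩
  have hcoeff : coeff (υ + κ) (s * p) = coeff υ s * coeff κ p :=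
    AddMonoidAlgebra.coeff_mul_add_of_uniqueAdd huniq
  refine hυκ (hsp (mem_support_iff.2 ?_))
  rw [hcoeff]
  exact mul_ne_zero (mem_support_iff.1 hυ) (mem_support_iff.1 hκ.1)

theorem isPrime_span_X_image [Nontrivial R] (C : Set σ) :
    (Ideal.span (X '' C : Set (MvPolynomial σ R))).IsPrime := by
  have hmem (p : MvPolynomial σ R) :
      p ∈ Ideal.span (X '' C) ↔ ↑p.support ⊆ {d : σ →₀ ℕ | ∃ i ∈ C, d i ≠ 0} := by
    simp [mem_ideal_span_X_image, Set.subset_def]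
  refine Ideal.isPrime_iff.2 ⟨fun htop => ?_, fun {s p} hsp => or_iff_not_imp_left.2 fun hs => ?_⟩
  · simpa using (hmem 1).1 (htop ▸ Submodule.mem_top)
  · rw [hmem] at hsp ⊢
    refine support_subset_of_support_mul_subset ?_ ?_ hs hsp
    · intro d d' hdd' ⟨i, hi, hd⟩
      exact ⟨i, hi, (Nat.pos_of_ne_zero hd).trans_le (hdd' i) |>.ne'⟩
    · rintro d e he ⟨i, hi, hde⟩
      exact ⟨i, hi, by simpa [he i hi] using hde⟩

end MvPolynomial

namespace SimpleGraph

section Exponents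

variable {V : Type*} {w : V → ℕ} {d : V →₀ ℕ}

noncomputable def pairExp (w : V → ℕ) (i j : V) : V →₀ ℕ :=
  Finsupp.single i (w i) + Finsupp.single j (w j)

theorem le_pairExp_left (i j : V) : w i ≤ pairExp w i j i := by
  simp [pairExp]

theorem le_pairExp_right (i j : V) : w j ≤ pairExp w i j j := by
  simp [pairExp]

theorem pairExp_add_pairExp_le_of_disjoint {i j k l : V} (hij : i ≠ j) (hkl : k ≠ l)
    (hik : i ≠ k) (hil : i ≠ l) (hjk : j ≠ k) (hjl : j ≠ l)
    (hi : w i ≤ d i) (hj : w j ≤ d j) (hk : w k ≤ d k) (hl : w l ≤ d l) :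
    pairExp w i j + pairExp w k l ≤ d := by
  classical
  rw [Finsupp.le_def]
  intro v
  simp only [pairExp, Finsupp.coe_add, Pi.add_apply, Finsupp.single_apply]
  grind

theorem pairExp_add_pairExp_le_of_center {z a b : V} (hza : z ≠ a) (hzb : z ≠ b) (hab : a ≠ b)
    (hz : 2 * w z ≤ d z) (ha : w a ≤ d a) (hb : w b ≤ d b) :
    pairExp w z a + pairExp w z b ≤ d := by
  classical
  rw [Finsupp.le_def]
  intro v
  simp only [pairExp, Finsupp.coe_add, Pi.add_apply, Finsupp.single_apply]
  grind

theorem pairExp_add_self_le {z a : V} (hza : z ≠ a) (hz : 2 * w z ≤ d z) (ha : 2 * w a ≤ d a) :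
    pairExp w z a + pairExp w z a ≤ d := by
  classical
  rw [Finsupp.le_def]
  intro v
  simp only [pairExp, Finsupp.coe_add, Pi.add_apply, Finsupp.single_apply]
  grind

theorem pairExp_add_pairExp_le_add {u u' v v' : V} (huv : u ≠ v) (hu : w u ≤ d u)
    (hv : w v ≤ d v) :
    pairExp w u u' + pairExp w v v' ≤
      d + (Finsupp.single u' (w u') + Finsupp.single v' (w v')) := by
  classical
  rw [Finsupp.le_def]
  intro x
  simp only [pairExp, Finsupp.coe_add, Pi.add_apply, Finsupp.single_apply]
  grind

end Exponents

section Combinatorics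

variable {V : Type*} (G : SimpleGraph V) (w : V → ℕ)

/-! For `I = G.weightedEdgeIdeal R w`, generated by the `x^(pairExp w i j)` over the edges `ij`:
`G.IsSqExp w d` says `x^d ∈ I^2`, `G.IsLocSqExp w C d` says `x^d ∈ I^2 R_P ∩ R` for
`P = (x_v : v ∈ C)`, and `G.IsSymbSqExp w d` says `x^d ∈ I^(2)`. -/

def IsSqExp (d : V →₀ ℕ) : Prop :=
  ∃ i j k l, G.Adj i j ∧ G.Adj k l ∧ pairExp w i j + pairExp w k l ≤ d

def IsLocSqExp (C : Set V) (d : V →₀ ℕ) : Prop :=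
  ∃ e : V →₀ ℕ, (∀ i ∈ C, e i = 0) ∧ G.IsSqExp w (d + e)

def IsSymbSqExp (d : V →₀ ℕ) : Prop :=
  ∀ C, Minimal G.IsVertexCover C → G.IsLocSqExp w C d

def IsFullEdge (d : V →₀ ℕ) (i j : V) : Prop :=
  G.Adj i j ∧ w i ≤ d i ∧ w j ≤ d j

def HasFullTriangle (d : V →₀ ℕ) : Prop :=
  ∃ i j k, G.IsFullEdge w d i j ∧ G.Adj j k ∧ G.Adj i k ∧ w k ≤ d k

variable {G w} {d : V →₀ ℕ}

theorem IsSqExp.mono {d' : V →₀ ℕ} (h : G.IsSqExp w d) (hd : d ≤ d') : G.IsSqExp w d' :=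
  let ⟨i, j, k, l, hij, hkl, hle⟩ := h
  ⟨i, j, k, l, hij, hkl, hle.trans hd⟩

theorem IsSqExp.isLocSqExp (h : G.IsSqExp w d) (C : Set V) : G.IsLocSqExp w C d :=
  ⟨0, fun _ _ => rfl, by simpa using h⟩

theorem IsLocSqExp.mono {C : Set V} {d' : V →₀ ℕ} (h : G.IsLocSqExp w C d) (hd : d ≤ d') :
    G.IsLocSqExp w C d' :=
  let ⟨e, he, hde⟩ := h
  ⟨e, he, hde.mono (add_le_add_left hd e)⟩

theorem IsLocSqExp.of_add {C : Set V} {e : V →₀ ℕ} (h : G.IsLocSqExp w C (d + e))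
    (he : ∀ i ∈ C, e i = 0) : G.IsLocSqExp w C d :=
  let ⟨e', he', hde⟩ := h
  ⟨e + e', fun i hi => by simp [he i hi, he' i hi], by rwa [← add_assoc]⟩

theorem IsFullEdge.symm {i j : V} (h : G.IsFullEdge w d i j) : G.IsFullEdge w d j i :=
  ⟨h.1.symm, h.2.2, h.2.1⟩

theorem exists_adj_notMem_of_minimal_isVertexCover {C : Set V}
    (hC : Minimal G.IsVertexCover C) {v : V} (hv : v ∈ C) : ∃ s ∉ C, G.Adj v s := by
  by_contra! h
  have hcov : G.IsVertexCover (C \ {v}) := by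
    intro i j hij
    have := hC.1 hij
    grind [Adj.ne, adj_symm]
  exact (hC.2 hcov Set.sdiff_subset hv).2 rfl

theorem exists_minimal_isVertexCover_subset [Finite V] {U : Set V} (hU : G.IsVertexCover U) :
    ∃ C ⊆ U, Minimal G.IsVertexCover C :=
  exists_minimal_le_of_wellFoundedLT _ U hU

theorem isLocSqExp_of_adj_notMem {C : Set V} {u u' v v' : V} (huv : u ≠ v) (hu : G.Adj u u')
    (hv : G.Adj v v') (hu' : u' ∉ C) (hv' : v' ∉ C) (hdu : w u ≤ d u) (hdv : w v ≤ d v) :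
    G.IsLocSqExp w C d := by
  refine ⟨Finsupp.single u' (w u') + Finsupp.single v' (w v'), fun i hi => ?_,
    u, u', v, v', hu, hv, pairExp_add_pairExp_le_add huv hdu hdv⟩
  rw [Finsupp.coe_add, Pi.add_apply, Finsupp.single_eq_of_ne (by grind),
    Finsupp.single_eq_of_ne (by grind), add_zero]

theorem HasFullTriangle.isSymbSqExp (h : G.HasFullTriangle w d) : G.IsSymbSqExp w d := by
  obtain ⟨i, j, k, ⟨hij, hi, hj⟩, hjk, hik, hk⟩ := h
  intro C hC
  obtain ⟨u, v, huv, hu, hv, hdu, hdv⟩ :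
      ∃ u v, u ≠ v ∧ u ∈ C ∧ v ∈ C ∧ w u ≤ d u ∧ w v ≤ d v := by
    by_cases hiC : i ∈ C
    · rcases hC.1 hjk with hjC | hkC
      exacts [⟨i, j, hij.ne, hiC, hjC, hi, hj⟩, ⟨i, k, hik.ne, hiC, hkC, hi, hk⟩]
    · exact ⟨j, k, hjk.ne, (hC.1 hij).resolve_left hiC, (hC.1 hik).resolve_left hiC, hj, hk⟩
  obtain ⟨u', hu'C, huu'⟩ := exists_adj_notMem_of_minimal_isVertexCover hC hu
  obtain ⟨v', hv'C, hvv'⟩ := exists_adj_notMem_of_minimal_isVertexCover hC hv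
  exact isLocSqExp_of_adj_notMem huv huu' hvv' hu'C hv'C hdu hdv

theorem exists_minimal_isVertexCover_not_isLocSqExp [Finite V] {Y : Set V}
    (hY : Y.Subsingleton) (hYd : ∀ y ∈ Y, d y < 2 * w y)
    (hfull : ∀ i j, G.IsFullEdge w d i j → i ∈ Y ∨ j ∈ Y) :
    ∃ C, Minimal G.IsVertexCover C ∧ ¬ G.IsLocSqExp w C d := by
  have hU : G.IsVertexCover ({v | d v < w v} ∪ Y) := by
    intro i j hij
    by_cases hi : d i < w i
    · exact Or.inl (Or.inl hi)
    by_cases hj : d j < w j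
    · exact Or.inr (Or.inl hj)
    exact (hfull i j ⟨hij, not_lt.1 hi, not_lt.1 hj⟩).imp Or.inr Or.inr
  obtain ⟨C, hCU, hC⟩ := G.exists_minimal_isVertexCover_subset hU
  refine ⟨C, hC, ?_⟩
  rintro ⟨e, he, i, j, k, l, hij, hkl, hle⟩
  have hit {a b : V} (hab : G.Adj a b) : ∃ v ∈ C, w v ≤ pairExp w a b v :=
    (hC.1 hab).elim (fun ha => ⟨a, ha, le_pairExp_left a b⟩)
      (fun hb => ⟨b, hb, le_pairExp_right a b⟩)
  have hleC (v : V) (hv : v ∈ C) : pairExp w i j v + pairExp w k l v ≤ d v := by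
    simpa [he v hv] using Finsupp.le_def.1 hle v
  obtain ⟨v₁, hv₁, h₁⟩ := hit hij
  obtain ⟨v₂, hv₂, h₂⟩ := hit hkl
  have hd₁ := hleC v₁ hv₁
  have hd₂ := hleC v₂ hv₂
  have hY₁ : v₁ ∈ Y := (hCU hv₁).resolve_left fun h : d v₁ < w v₁ => by omega
  have hY₂ : v₂ ∈ Y := (hCU hv₂).resolve_left fun h : d v₂ < w v₂ => by omega
  obtain rfl := hY hY₁ hY₂
  have := hYd v₁ hY₁
  omega

theorem IsFullEdge.meet (hsq : ¬ G.IsSqExp w d) {i j k l : V} (h₁ : G.IsFullEdge w d i j)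
    (h₂ : G.IsFullEdge w d k l) : i = k ∨ i = l ∨ j = k ∨ j = l := by
  by_contra! h
  exact hsq ⟨i, j, k, l, h₁.1, h₂.1, pairExp_add_pairExp_le_of_disjoint h₁.1.ne h₂.1.ne
    h.1 h.2.1 h.2.2.1 h.2.2.2 h₁.2.1 h₁.2.2 h₂.2.1 h₂.2.2⟩

theorem exists_center_of_isFullEdge (hsq : ¬ G.IsSqExp w d) (htri : ¬ G.HasFullTriangle w d)
    {p q : V} (hpq : G.IsFullEdge w d p q) :
    ∃ z a, G.IsFullEdge w d z a ∧ ∀ i j, G.IsFullEdge w d i j → z = i ∨ z = j := by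
  have other {x y i j : V} (hxy : G.IsFullEdge w d x y) (hij : G.IsFullEdge w d i j)
      (hxi : x ≠ i) (hxj : x ≠ j) : ∃ r ≠ x, G.IsFullEdge w d y r := by
    rcases hxy.meet hsq hij with h | h | rfl | rfl
    exacts [(hxi h).elim, (hxj h).elim, ⟨j, hxj.symm, hij⟩, ⟨i, hxi.symm, hij.symm⟩]
  by_contra! h
  obtain ⟨i₁, j₁, h₁, hp₁, hp₂⟩ := h p q hpq
  obtain ⟨i₂, j₂, h₂, hq₁, hq₂⟩ := h q p hpq.symm
  obtain ⟨r, hrp, hqr⟩ := other hpq h₁ hp₁ hp₂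
  obtain ⟨s, hsq', hps⟩ := other hpq.symm h₂ hq₁ hq₂
  rcases hqr.meet hsq hps with h | h | h | rfl
  · exact hpq.1.ne h.symm
  · exact hsq' h.symm
  · exact hrp h
  · exact htri ⟨p, q, r, hpq, hqr.1, hps.1, hqr.2.2⟩

theorem exists_subsingleton_hitting_isFullEdge (hsq : ¬ G.IsSqExp w d)
    (htri : ¬ G.HasFullTriangle w d) :
    ∃ Y : Set V, Y.Subsingleton ∧ (∀ y ∈ Y, d y < 2 * w y) ∧
      ∀ i j, G.IsFullEdge w d i j → i ∈ Y ∨ j ∈ Y := by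
  by_cases hE : ∃ p q, G.IsFullEdge w d p q
  swap
  · push Not at hE
    exact ⟨∅, Set.subsingleton_empty, by simp, fun i j h => (hE i j h).elim⟩
  obtain ⟨p, q, hpq⟩ := hE
  obtain ⟨z, a, hza, hz⟩ := exists_center_of_isFullEdge hsq htri hpq
  by_cases h2z : d z < 2 * w z
  · exact ⟨{z}, Set.subsingleton_singleton, by simpa using h2z,
      fun i j h => by simpa [eq_comm] using hz i j h⟩
  refine ⟨{a}, Set.subsingleton_singleton, fun y hy => ?_, fun i j hij => ?_⟩
  · rw [Set.mem_singleton_iff.1 hy]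
    by_contra! h2a
    exact hsq ⟨z, a, z, a, hza.1, hza.1, pairExp_add_self_le hza.1.ne (not_lt.1 h2z) h2a⟩
  · have hza' {j : V} (hzj : G.IsFullEdge w d z j) : j = a := by
      by_contra hja
      exact hsq ⟨z, a, z, j, hza.1, hzj.1, pairExp_add_pairExp_le_of_center hza.1.ne hzj.1.ne
        (Ne.symm hja) (not_lt.1 h2z) hza.2.2 hzj.2.2⟩
    rcases hz i j hij with rfl | rfl
    exacts [Or.inr (hza' hij), Or.inl (hza' hij.symm)]

theorem IsSymbSqExp.isSqExp_or_hasFullTriangle [Finite V] (h : G.IsSymbSqExp w d) :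
    G.IsSqExp w d ∨ G.HasFullTriangle w d := by
  by_contra! hcon
  obtain ⟨Y, hY, hYd, hfull⟩ := exists_subsingleton_hitting_isFullEdge hcon.1 hcon.2
  obtain ⟨C, hC, hnot⟩ := exists_minimal_isVertexCover_not_isLocSqExp hY hYd hfull
  exact hnot (h C hC)

theorem HasFullTriangle.exists_isSqExp_nsmul_add {c a : V →₀ ℕ}
    (h : G.HasFullTriangle w (c + a)) (ha : ¬ G.HasFullTriangle w a) :
    ∃ m : ℕ, G.IsSqExp w (m • c + a) := by
  have at_vertex {v p q : V} (hvp : G.Adj v p) (hvq : G.Adj v q) (hpq : p ≠ q)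
      (hav : a v < w v) (hv : w v ≤ c v + a v) (hp : w p ≤ c p + a p) (hq : w q ≤ c q + a q) :
      ∃ m : ℕ, G.IsSqExp w (m • c + a) := by
    refine ⟨w v + 1, v, p, v, q, hvp, hvq,
      pairExp_add_pairExp_le_of_center hvp.ne hvq.ne hpq ?_ ?_ ?_⟩ <;>
    simp only [Finsupp.coe_add, Finsupp.coe_smul, Pi.add_apply, Pi.smul_apply, smul_eq_mul] <;>
    nlinarith
  obtain ⟨i, j, k, ⟨hij, hi, hj⟩, hjk, hik, hk⟩ := h
  simp only [Finsupp.coe_add, Pi.add_apply] at hi hj hk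
  by_cases hai : a i < w i
  · exact at_vertex hij hik hjk.ne hai hi hj hk
  by_cases haj : a j < w j
  · exact at_vertex hij.symm hjk hik.ne haj hj hi hk
  by_cases hak : a k < w k
  · exact at_vertex hik.symm hjk.symm hij.ne hak hk hi hj
  exact (ha ⟨i, j, k, ⟨hij, not_lt.1 hai, not_lt.1 haj⟩, hjk, hik, not_lt.1 hak⟩).elim

theorem IsSymbSqExp.exists_isSqExp_nsmul_add [Finite V] {c a : V →₀ ℕ}
    (h : G.IsSymbSqExp w (c + a)) (ha : ¬ G.HasFullTriangle w a) :
    ∃ m : ℕ, G.IsSqExp w (m • c + a) := by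
  rcases h.isSqExp_or_hasFullTriangle with hsq | htri
  · exact ⟨1, by rwa [one_smul]⟩
  · exact htri.exists_isSqExp_nsmul_add ha

end Combinatorics

section WeightedEdgeIdeal

variable {V : Type*} (G : SimpleGraph V)

noncomputable def weightedEdgeIdeal (R : Type*) [CommSemiring R] (w : V → ℕ) :
    Ideal (MvPolynomial V R) :=
  Ideal.span ((monomial · (1 : R)) '' {e | ∃ i j, G.Adj i j ∧ pairExp w i j = e})

variable {G} {R : Type*} [CommSemiring R] {w : V → ℕ}

theorem monomial_pairExp_mem_weightedEdgeIdeal {i j : V} (hij : G.Adj i j) :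
    monomial (pairExp w i j) (1 : R) ∈ G.weightedEdgeIdeal R w :=
  Ideal.subset_span ⟨_, ⟨i, j, hij, rfl⟩, rfl⟩

open scoped Pointwise in
theorem mem_weightedEdgeIdeal_sq_iff {p : MvPolynomial V R} :
    p ∈ G.weightedEdgeIdeal R w ^ 2 ↔ ∀ d ∈ p.support, G.IsSqExp w d := by
  have hsq : ((monomial · (1 : R)) '' {e | ∃ i j, G.Adj i j ∧ pairExp w i j = e}) *
      ((monomial · (1 : R)) '' {e | ∃ i j, G.Adj i j ∧ pairExp w i j = e}) =
      (monomial · (1 : R)) '' {e | ∃ i j k l, G.Adj i j ∧ G.Adj k l ∧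
        pairExp w i j + pairExp w k l = e} := by
    ext f
    simp only [Set.mem_mul, Set.mem_image, Set.mem_ofPred_eq]
    constructor
    · rintro ⟨_, ⟨_, ⟨i, j, hij, rfl⟩, rfl⟩, _, ⟨_, ⟨k, l, hkl, rfl⟩, rfl⟩, rfl⟩
      exact ⟨_, ⟨i, j, k, l, hij, hkl, rfl⟩, by rw [monomial_mul, one_mul]⟩
    · rintro ⟨_, ⟨i, j, k, l, hij, hkl, rfl⟩, rfl⟩
      exact ⟨_, ⟨_, ⟨i, j, hij, rfl⟩, rfl⟩, _, ⟨_, ⟨k, l, hkl, rfl⟩, rfl⟩,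
        by rw [monomial_mul, one_mul]⟩
  rw [weightedEdgeIdeal, sq, Ideal.span_mul_span', hsq, mem_ideal_span_monomial_image]
  refine forall₂_congr fun d _ => ⟨?_, ?_⟩
  · rintro ⟨_, ⟨i, j, k, l, hij, hkl, rfl⟩, hle⟩
    exact ⟨i, j, k, l, hij, hkl, hle⟩
  · rintro ⟨i, j, k, l, hij, hkl, hle⟩
    exact ⟨_, ⟨i, j, k, l, hij, hkl, rfl⟩, hle⟩

theorem monomial_mem_weightedEdgeIdeal_sq {d : V →₀ ℕ} (h : G.IsSqExp w d) :
    monomial d (1 : R) ∈ G.weightedEdgeIdeal R w ^ 2 :=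
  mem_weightedEdgeIdeal_sq_iff.2 fun _ hd => by
    rwa [Finset.mem_singleton.1 (support_monomial_subset hd)]

theorem X_mem_or_X_mem_of_adj {P : Ideal (MvPolynomial V R)} [hP : P.IsPrime]
    (hIP : G.weightedEdgeIdeal R w ≤ P) {i j : V} (hij : G.Adj i j) : X i ∈ P ∨ X j ∈ P := by
  have h := hIP (monomial_pairExp_mem_weightedEdgeIdeal hij)
  rw [pairExp, ← one_mul (1 : R), ← monomial_mul, ← X_pow_eq_monomial, ← X_pow_eq_monomial] at h
  exact (hP.mem_or_mem h).imp (hP.mem_of_pow_mem _) (hP.mem_of_pow_mem _)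

theorem isVertexCover_setOf_X_mem {P : Ideal (MvPolynomial V R)} [P.IsPrime]
    (hIP : G.weightedEdgeIdeal R w ≤ P) : G.IsVertexCover {v | X v ∈ P} :=
  fun _ _ hij => X_mem_or_X_mem_of_adj hIP hij

theorem weightedEdgeIdeal_le_span_X_image (hw : ∀ i, 1 ≤ w i) {C : Set V}
    (hC : G.IsVertexCover C) : G.weightedEdgeIdeal R w ≤ Ideal.span (X '' C) := by
  rw [weightedEdgeIdeal, Ideal.span_le]
  rintro _ ⟨_, ⟨i, j, hij, rfl⟩, rfl⟩
  rw [SetLike.mem_coe, mem_ideal_span_X_image]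
  intro m hm
  rw [Finset.mem_singleton.1 (support_monomial_subset hm)]
  rcases hC hij with hi | hj
  · exact ⟨i, hi, (Nat.lt_of_lt_of_le (hw i) (le_pairExp_left i j)).ne'⟩
  · exact ⟨j, hj, (Nat.lt_of_lt_of_le (hw j) (le_pairExp_right i j)).ne'⟩

end WeightedEdgeIdeal

section SymbolicSquare

variable {V : Type*} {G : SimpleGraph V} {R : Type*} [CommRing R] [IsDomain R] {w : V → ℕ}

theorem span_X_image_mem_minimalPrimes (hw : ∀ i, 1 ≤ w i) {C : Set V}
    (hC : Minimal G.IsVertexCover C) :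
    Ideal.span (X '' C) ∈ (G.weightedEdgeIdeal R w).minimalPrimes := by
  refine ⟨⟨isPrime_span_X_image C, weightedEdgeIdeal_le_span_X_image hw hC.1⟩, ?_⟩
  rintro Q ⟨hQ, hIQ⟩ hQC
  have hCQ := hC.2 (isVertexCover_setOf_X_mem hIQ) fun v hv => X_mem_span_X_image_iff.1 (hQC hv)
  rw [Ideal.span_le]
  rintro _ ⟨v, hv, rfl⟩
  exact hCQ hv

theorem exists_minimal_isVertexCover_of_mem_minimalPrimes [Finite V] (hw : ∀ i, 1 ≤ w i)
    {P : Ideal (MvPolynomial V R)} (hP : P ∈ (G.weightedEdgeIdeal R w).minimalPrimes) :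
    ∃ C, Minimal G.IsVertexCover C ∧ P = Ideal.span (X '' C) := by
  have := hP.1.1
  obtain ⟨C, hCP, hC⟩ := G.exists_minimal_isVertexCover_subset (isVertexCover_setOf_X_mem hP.1.2)
  have hle : Ideal.span (X '' C) ≤ P := by
    rw [Ideal.span_le]
    rintro _ ⟨v, hv, rfl⟩
    exact hCP hv
  exact ⟨C, hC, le_antisymm (hP.2 (span_X_image_mem_minimalPrimes hw hC).1 hle) hle⟩

theorem isLocSqExp_of_mul_mem_sq {C : Set V} {s p : MvPolynomial V R}
    (hs : s ∉ Ideal.span (X '' C)) (hsp : s * p ∈ G.weightedEdgeIdeal R w ^ 2) :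
    ∀ d ∈ p.support, G.IsLocSqExp w C d :=
  support_subset_of_support_mul_subset (S := {d | G.IsLocSqExp w C d})
    (fun _ _ hd h => h.mono hd) (fun _ _ he h => h.of_add he) hs
    (fun d hd => (mem_weightedEdgeIdeal_sq_iff.1 hsp d hd).isLocSqExp C)

theorem isSymbSqExp_of_mem_symbolicPower (hw : ∀ i, 1 ≤ w i) {p : MvPolynomial V R}
    (hp : p ∈ symbolicPower (G.weightedEdgeIdeal R w) 2) :
    ∀ d ∈ p.support, G.IsSymbSqExp w d := by
  intro d hd C hC
  obtain ⟨s, hs, hsp⟩ := mem_symbolicPower_iff.1 hp _ (span_X_image_mem_minimalPrimes hw hC)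
  exact isLocSqExp_of_mul_mem_sq hs hsp d hd

theorem monomial_mem_symbolicPower [Finite V] (hw : ∀ i, 1 ≤ w i) {d : V →₀ ℕ}
    (h : G.IsSymbSqExp w d) :
    monomial d (1 : R) ∈ symbolicPower (G.weightedEdgeIdeal R w) 2 := by
  classical
  refine mem_symbolicPower_iff.2 fun P hP => ?_
  obtain ⟨C, hC, rfl⟩ := exists_minimal_isVertexCover_of_mem_minimalPrimes hw hP
  obtain ⟨e, he, hde⟩ := h C hC
  refine ⟨monomial e 1, fun hmem => ?_, ?_⟩
  · obtain ⟨i, hi, hei⟩ := mem_ideal_span_X_image.1 hmem e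
      (by rw [support_monomial, if_neg one_ne_zero]; exact Finset.mem_singleton_self e)
    exact hei (he i hi)
  · rw [monomial_mul, one_mul, add_comm]
    exact monomial_mem_weightedEdgeIdeal_sq hde

theorem radical_colon_symbolicPower_eq_radical_colon_sq [Finite V] (hw : ∀ i, 1 ≤ w i)
    {a : V →₀ ℕ} (ha : monomial a (1 : R) ∉ symbolicPower (G.weightedEdgeIdeal R w) 2) :
    (Submodule.colon (symbolicPower (G.weightedEdgeIdeal R w) 2)
        (Ideal.span {monomial a (1 : R)})).radical =
      (Submodule.colon (G.weightedEdgeIdeal R w ^ 2)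
        (Ideal.span {monomial a (1 : R)})).radical := by
  have hta : ¬ G.HasFullTriangle w a := fun h =>
    ha (monomial_mem_symbolicPower hw h.isSymbSqExp)
  refine le_antisymm (Ideal.radical_le_radical_iff.2 fun g hg => ?_)
    (Ideal.radical_mono (Submodule.colon_mono (pow_le_symbolicPower _ _) le_rfl))
  rw [Ideal.mem_colon_span_singleton] at hg
  refine mem_ideal_of_forall_monomial_one_mem fun c hc => ?_
  have hca : c + a ∈ (g * monomial a 1).support := by
    rwa [mem_support_iff, coeff_mul_monomial, mul_one, ← mem_support_iff]
  obtain ⟨m, hm⟩ := (isSymbSqExp_of_mem_symbolicPower hw hg _ hca).exists_isSqExp_nsmul_add hta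
  refine ⟨m, Ideal.mem_colon_span_singleton.2 ?_⟩
  rw [monomial_pow, one_pow, monomial_mul, one_mul]
  exact monomial_mem_weightedEdgeIdeal_sq hm

end SymbolicSquare

end SimpleGraph

namespace WOGraph

variable {n : ℕ} {D : WOGraph n}

theorem w_eq_one_of_adj (hsink : ∀ i ∈ D.Vplus, D.IsSink i) {i j : Fin n} (hij : D.adj i j) :
    D.w i = 1 := by
  by_contra h
  exact hsink i (show 2 ≤ D.w i by have := D.one_le_w i; omega) j hij

theorem edgeIdeal_eq_weightedEdgeIdeal (K : Type*) [Field K]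
    (hsink : ∀ i ∈ D.Vplus, D.IsSink i) :
    edgeIdeal K D = D.underlying.weightedEdgeIdeal K D.w := by
  have hgen {i j : Fin n} (hij : D.adj i j) :
      X i * X j ^ D.w j = monomial (SimpleGraph.pairExp D.w i j) (1 : K) := by
    rw [SimpleGraph.pairExp, ← one_mul (1 : K), ← monomial_mul, ← X_pow_eq_monomial,
      ← X_pow_eq_monomial, w_eq_one_of_adj hsink hij, pow_one]
  rw [edgeIdeal, edgeIdealOn, SimpleGraph.weightedEdgeIdeal]
  congr 1
  ext f
  constructor
  · rintro ⟨i, j, -, -, hij, rfl⟩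
    exact ⟨_, ⟨i, j, Or.inl hij, rfl⟩, (hgen hij).symm⟩
  · rintro ⟨_, ⟨i, j, hij | hji, rfl⟩, rfl⟩
    · exact ⟨i, j, trivial, trivial, hij, (hgen hij).symm⟩
    · exact ⟨j, i, trivial, trivial, hji, by rw [hgen hji, SimpleGraph.pairExp, add_comm]; rfl⟩

end WOGraph

/-- If `V⁺` are sinks, `I = I(D)` and `x^a ∉ I^{(2)}`, then
`√(I^{(2)} : x^a) = √(I^2 : x^a)`. -/
theorem stmt2 {n : ℕ} (K : Type*) [Field K] (D : WOGraph n)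
    (hsink : ∀ i ∈ D.Vplus, D.IsSink i)
    (a : Fin n →₀ ℕ)
    (ha : (monomial a (1 : K)) ∉ symbolicPower (edgeIdeal K D) 2) :
    (Submodule.colon (symbolicPower (edgeIdeal K D) 2)
        (Ideal.span {(monomial a (1 : K))})).radical =
      (Submodule.colon ((edgeIdeal K D) ^ 2) (Ideal.span {(monomial a (1 : K))})).radical := by
  rw [D.edgeIdeal_eq_weightedEdgeIdeal K hsink] at ha ⊢
  exact SimpleGraph.radical_colon_symbolicPower_eq_radical_colon_sq D.one_le_w ha
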